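/- arXiv:0904.3057 — 12 statements merged into one kernel-verified Lean document; each statement's English description precedes it below -/
import Mathlib

section
/- If f ∈ ℂ[x] has degree d ≥ 1 and α is a complex root of f, then |α| ≤ 2·max over 1 ≤ i ≤ d of (|a_{d−i}|/|a_d|)^{1/i} (Knuth's root bound). -/
/-!
If `‖α‖ > 2B`, where `B` is the maximum in the bound, then `‖a_j‖ ≤ ‖a_d‖ B^(d-j)` makes each lower
term `‖a_j α^j‖` at most `2^-(d-j) ‖a_d α^d‖`. These fractions sum to `1 - 2^-d < 1`, so the
leading term cannot cancel the others and `α` is not a root.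
-/

open Polynomial Finset

theorem le_mul_pow_of_div_rpow_one_div_le {x c B : ℝ} (hx : 0 ≤ x) (hc : 0 < c) {n : ℕ}
    (hn : n ≠ 0) (h : (x / c) ^ ((1 : ℝ) / n) ≤ B) : x ≤ c * B ^ n := by
  have hB : 0 ≤ B := (Real.rpow_nonneg (by positivity) _).trans h
  rwa [one_div, Real.rpow_inv_le_iff_of_pos (by positivity) hB (by positivity), Real.rpow_natCast,
    div_le_iff₀' hc] at h

theorem sum_range_inv_two_pow_sub (d : ℕ) :
    ∑ j ∈ range d, (2⁻¹ : ℝ) ^ (d - j) = 1 - 2⁻¹ ^ d := by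
  rw [← sum_range_reflect]
  have hreflect : ∀ j ∈ range d, (2⁻¹ : ℝ) ^ (d - (d - 1 - j)) = 2⁻¹ * 2⁻¹ ^ j := fun j hj => by
    rw [← pow_succ', show d - (d - 1 - j) = j + 1 by grind]
  rw [sum_congr rfl hreflect, ← mul_sum, geom_sum_eq (by norm_num)]
  ring

namespace Polynomial
variable {K : Type*} [NormedDivisionRing K]

theorem IsRoot.norm_leadingCoeff_mul_pow_le {p : K[X]} {a : K} (h : p.IsRoot a) :
    ‖p.leadingCoeff‖ * ‖a‖ ^ p.natDegree ≤ ∑ j ∈ range p.natDegree, ‖p.coeff j‖ * ‖a‖ ^ j := by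
  rw [IsRoot.def, eval_eq_sum_range, sum_range_succ, add_eq_zero_iff_neg_eq'] at h
  calc ‖p.leadingCoeff‖ * ‖a‖ ^ p.natDegree = ‖∑ j ∈ range p.natDegree, p.coeff j * a ^ j‖ := by
        rw [← h, norm_neg, norm_mul, norm_pow, coeff_natDegree]
    _ ≤ _ := (norm_sum_le _ _).trans_eq (by simp only [norm_mul, norm_pow])

theorem IsRoot.norm_le_two_mul {p : K[X]} (hp : p ≠ 0) {a : K} (h : p.IsRoot a) {B : ℝ}
    (hB : 0 ≤ B)
    (hcoeff : ∀ j < p.natDegree, ‖p.coeff j‖ ≤ ‖p.leadingCoeff‖ * B ^ (p.natDegree - j)) :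
    ‖a‖ ≤ 2 * B := by
  set d := p.natDegree
  set c := ‖p.leadingCoeff‖
  by_contra! hlt
  have hc : 0 < c := norm_pos_iff.mpr (leadingCoeff_ne_zero.mpr hp)
  have hterm : ∀ j ∈ range d, ‖p.coeff j‖ * ‖a‖ ^ j ≤ c * ‖a‖ ^ d * 2⁻¹ ^ (d - j) := by
    intro j hj
    have hjd : j < d := mem_range.mp hj
    calc ‖p.coeff j‖ * ‖a‖ ^ j ≤ c * B ^ (d - j) * ‖a‖ ^ j := by gcongr; exact hcoeff j hjd
      _ ≤ c * (‖a‖ / 2) ^ (d - j) * ‖a‖ ^ j := by gcongr; linarith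
      _ = c * (‖a‖ ^ (d - j) * ‖a‖ ^ j) * 2⁻¹ ^ (d - j) := by ring
      _ = c * ‖a‖ ^ d * 2⁻¹ ^ (d - j) := by rw [← pow_add, Nat.sub_add_cancel hjd.le]
  have hpos : 0 < c * ‖a‖ ^ d := by have := hB.trans_lt (by linarith : B < ‖a‖); positivity
  have hsum := h.norm_leadingCoeff_mul_pow_le.trans (sum_le_sum hterm)
  rw [← mul_sum, sum_range_inv_two_pow_sub] at hsum
  exact hsum.not_gt (mul_lt_of_lt_one_right hpos (by simp))

end Polynomial

/-- Knuth's root bound: if `f` has degree `d ≥ 1` and `α` is a complex root of `f`,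
then `|α| ≤ 2 · max_{1 ≤ i ≤ d} (|a_{d−i}|/|a_d|)^{1/i}`. -/
theorem knuth_root_bound (f : Polynomial ℂ) (d : ℕ) (hd : f.natDegree = d)
    (hd1 : 1 ≤ d) (hne : (Finset.Icc 1 d).Nonempty := Finset.nonempty_Icc.mpr hd1)
    (α : ℂ) (hα : f.eval α = 0) :
    ‖α‖ ≤ 2 * (Finset.Icc 1 d).sup' hne
      (fun i => (‖f.coeff (d - i)‖ / ‖f.leadingCoeff‖) ^ ((1 : ℝ) / i)) := by
  subst hd
  have hf : f ≠ 0 := by rintro rfl; simp at hd1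
  have hc : 0 < ‖f.leadingCoeff‖ := norm_pos_iff.mpr (leadingCoeff_ne_zero.mpr hf)
  refine IsRoot.norm_le_two_mul hf hα ?_ fun j hj => ?_
  · exact le_sup'_of_le _ (left_mem_Icc.mpr hd1) (Real.rpow_nonneg (by positivity) _)
  · have hmem : f.natDegree - j ∈ Icc 1 f.natDegree := mem_Icc.mpr ⟨by omega, by omega⟩
    have hle := le_sup' (fun i => (‖f.coeff (f.natDegree - i)‖ / ‖f.leadingCoeff‖) ^ ((1 : ℝ) / i))
      hmem
    rw [Nat.sub_sub_self hj.le] at hle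
    exact le_mul_pow_of_div_rpow_one_div_le (norm_nonneg _) hc (by omega) hle
end

section
/- For any positive integers d1, d2, one has C(d1, ⌊d1/2⌋) · C(d2, ⌊d2/2⌋) ≤ (2/3) · C(d1+d2, ⌊(d1+d2)/2⌋), where C(n,k) denotes the binomial coefficient. -/
/-!
By Vandermonde, `C(m + n, k) = ∑ C(m, i) C(n, k - i)`. For `k = ⌊(m + n)/2⌋` the terms with `i`
at or next to `⌊m/2⌋` already add up to at least `3/2 · C(m, ⌊m/2⌋) C(n, ⌊n/2⌋)`: a binomial
coefficient one step off the middle is at least half the central one, and for odd length the two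
middle coefficients coincide. The three parity patterns of `(m, n)` are checked separately.
-/

open Finset

theorem sum_choose_mul_choose_le_add_choose {m n k : ℕ} {s : Finset (ℕ × ℕ)}
    (hs : ∀ p ∈ s, p.1 + p.2 = k) :
    ∑ p ∈ s, m.choose p.1 * n.choose p.2 ≤ (m + n).choose k :=
  Nat.add_choose_eq m n k ▸ sum_le_sum_of_subset fun p hp => mem_antidiagonal.2 (hs p hp)

theorem choose_le_two_mul_choose_succ {a : ℕ} (ha : 1 ≤ a) :
    (2 * a).choose a ≤ 2 * (2 * a).choose (a + 1) := by
  have h := Nat.choose_succ_right_eq (2 * a) a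
  rw [show 2 * a - a = a by omega] at h
  nlinarith

theorem choose_sub_one_eq_choose_succ {a : ℕ} (ha : 1 ≤ a) :
    (2 * a).choose (a - 1) = (2 * a).choose (a + 1) :=
  Nat.choose_symm_of_eq_add (by omega)

theorem three_mul_choose_mul_choose_le_of_even_of_odd {a b : ℕ} (ha : 1 ≤ a) :
    3 * ((2 * a).choose a * (2 * b + 1).choose b) ≤ 2 * (2 * a + (2 * b + 1)).choose (a + b) := by
  have hsum := sum_choose_mul_choose_le_add_choose (m := 2 * a) (n := 2 * b + 1)
    (s := {(a - 1, b + 1), (a, b)}) (k := a + b) (by simp; omega)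
  rw [sum_pair (by simp), choose_sub_one_eq_choose_succ ha, Nat.choose_symm_half] at hsum
  have hhalf := Nat.mul_le_mul_right ((2 * b + 1).choose b) (choose_le_two_mul_choose_succ ha)
  nlinarith

theorem three_mul_choose_mul_choose_le_of_even_of_even {a b : ℕ} (ha : 1 ≤ a) (hb : 1 ≤ b) :
    3 * ((2 * a).choose a * (2 * b).choose b) ≤ 2 * (2 * a + 2 * b).choose (a + b) := by
  have hsum := sum_choose_mul_choose_le_add_choose (m := 2 * a) (n := 2 * b)
    (s := {(a - 1, b + 1), (a, b), (a + 1, b - 1)}) (k := a + b) (by simp; omega)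
  rw [sum_insert (by simp), sum_pair (by simp), choose_sub_one_eq_choose_succ ha,
    choose_sub_one_eq_choose_succ hb] at hsum
  have hhalf := Nat.mul_le_mul (choose_le_two_mul_choose_succ ha) (choose_le_two_mul_choose_succ hb)
  nlinarith

theorem two_mul_choose_mul_choose_le_of_odd_of_odd (a b : ℕ) :
    2 * ((2 * a + 1).choose a * (2 * b + 1).choose b) ≤
      (2 * a + 1 + (2 * b + 1)).choose (a + b + 1) := by
  have hsum := sum_choose_mul_choose_le_add_choose (m := 2 * a + 1) (n := 2 * b + 1)
    (s := {(a, b + 1), (a + 1, b)}) (k := a + b + 1) (by simp; omega)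
  rw [sum_pair (by simp), Nat.choose_symm_half, Nat.choose_symm_half] at hsum
  linarith

theorem three_mul_choose_half_mul_choose_half_le {m n : ℕ} (hm : 1 ≤ m) (hn : 1 ≤ n) :
    3 * (m.choose (m / 2) * n.choose (n / 2)) ≤ 2 * (m + n).choose ((m + n) / 2) := by
  obtain ⟨a, rfl | rfl⟩ := Nat.even_or_odd' m <;> obtain ⟨b, rfl | rfl⟩ := Nat.even_or_odd' n
  · rw [show (2 * a + 2 * b) / 2 = a + b by omega, show 2 * a / 2 = a by omega,
      show 2 * b / 2 = b by omega]
    exact three_mul_choose_mul_choose_le_of_even_of_even (by omega) (by omega)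
  · rw [show (2 * a + (2 * b + 1)) / 2 = a + b by omega, show 2 * a / 2 = a by omega,
      show (2 * b + 1) / 2 = b by omega]
    exact three_mul_choose_mul_choose_le_of_even_of_odd (by omega)
  · have h := three_mul_choose_mul_choose_le_of_even_of_odd (a := b) (b := a) (by omega)
    rw [show (2 * a + 1 + 2 * b) / 2 = b + a by omega, show 2 * b / 2 = b by omega,
      show (2 * a + 1) / 2 = a by omega, mul_comm (Nat.choose _ _), add_comm (2 * a + 1)]
    exact h
  · rw [show (2 * a + 1 + (2 * b + 1)) / 2 = a + b + 1 by omega, show (2 * a + 1) / 2 = a by omega,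
      show (2 * b + 1) / 2 = b by omega]
    linarith [two_mul_choose_mul_choose_le_of_odd_of_odd a b]

/-- For positive integers `d1, d2`:
`C(d1,⌊d1/2⌋) · C(d2,⌊d2/2⌋) ≤ (2/3) · C(d1+d2,⌊(d1+d2)/2⌋)`. -/
theorem central_binomial_product_bound (d1 d2 : ℕ) (h1 : 1 ≤ d1) (h2 : 1 ≤ d2) :
    (d1.choose (d1 / 2) * d2.choose (d2 / 2) : ℝ) ≤
      (2 / 3) * ((d1 + d2).choose ((d1 + d2) / 2)) := by
  have h : (3 * (d1.choose (d1 / 2) * d2.choose (d2 / 2)) : ℝ) ≤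
      2 * (d1 + d2).choose ((d1 + d2) / 2) := by
    exact_mod_cast three_mul_choose_half_mul_choose_half_le h1 h2
  linarith
end

section
/- Mignotte's inequality: for any nonzero f ∈ ℂ[x], M(f) ≤ |f|_2, where |f|_2 is the l2-norm of the coefficient vector of f. -/
open Polynomial

/-- Mahler measure `M(f) = |lc(f)| · Π max(1,|α|)` over the complex roots of `f`. -/
noncomputable def mahlerMeasure (f : Polynomial ℂ) : ℝ :=
  ‖f.leadingCoeff‖ * ((f.roots).map (fun a => max 1 ‖a‖)).prod

/-- The `l2`-norm of the coefficient vector of `f`. -/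
noncomputable def l2Norm (f : Polynomial ℂ) : ℝ :=
  Real.sqrt (∑ i ∈ Finset.range (f.natDegree + 1), ‖f.coeff i‖ ^ 2)

theorem mahlerMeasure_eq_polynomial_mahlerMeasure (f : Polynomial ℂ) :
    _root_.mahlerMeasure f = f.mahlerMeasure :=
  (mahlerMeasure_eq_leadingCoeff_mul_prod_roots f).symm

theorem l2Norm_eq_sqrt_sum_support (f : Polynomial ℂ) :
    l2Norm f = √(∑ i ∈ f.support, ‖f.coeff i‖ ^ 2) := by
  rw [l2Norm, ← sum_over_range f (f := fun _ a => ‖a‖ ^ 2) (by simp), sum_def]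

theorem mahlerMeasure_le_l2Norm_general (f : Polynomial ℂ) :
    _root_.mahlerMeasure f ≤ l2Norm f := by
  rw [mahlerMeasure_eq_polynomial_mahlerMeasure, l2Norm_eq_sqrt_sum_support]
  exact mahlerMeasure_le_sqrt_sum_sq_norm_coeff f

/-- Mignotte's inequality: `M(f) ≤ |f|₂` for nonzero `f ∈ ℂ[x]`. -/
theorem mahlerMeasure_le_l2Norm (f : Polynomial ℂ) (hf : f ≠ 0) :
    _root_.mahlerMeasure f ≤ l2Norm f :=
  mahlerMeasure_le_l2Norm_general f
end

section
/- If f = g1·g2 is any nontrivial factorization in ℂ[x] (both factors of positive degree) with deg f = d, then ht(g1)·ht(g2) ≤ (2/3)·C(d, ⌊d/2⌋)·M(f); consequently min(ht(g1), ht(g2)) ≤ sqrt((2/3)·C(d, ⌊d/2⌋)·M(f)). -/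
open Polynomial

/-- Height: maximum absolute value of a coefficient. -/
noncomputable def ht (p : Polynomial ℂ) : ℝ := ⨆ i, ‖p.coeff i‖

/-!
Each factor satisfies the classical bound `ht g ≤ C(n, ⌊n/2⌋) M(g)` (its coefficients are
`lc(g)` times elementary symmetric functions of the roots), and `M` is multiplicative, so it
suffices that `3 C(a, ⌊a/2⌋) C(b, ⌊b/2⌋) ≤ 2 C(a + b, ⌊(a + b)/2⌋)` for `a, b ≥ 1`.
By Vandermonde, `C(a + b, ⌊(a + b)/2⌋)` contains the central product `C(a, ⌊a/2⌋) C(b, ⌊b/2⌋)`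
together with neighbouring products `C(a, i) C(b, j)`; since `C(2p, p ± 1) ≥ C(2p, p) / 2`
and `C(2q + 1, q + 1) = C(2q + 1, q)`, the neighbours add up to at least half the central one.
-/

open Finset

namespace Nat

lemma sum_choose_mul_choose_le_add_choose {m n k : ℕ} {s : Finset (ℕ × ℕ)}
    (hs : s ⊆ antidiagonal k) :
    ∑ ij ∈ s, m.choose ij.1 * n.choose ij.2 ≤ (m + n).choose k := by
  rw [add_choose_eq]
  exact sum_le_sum_of_subset hs

lemma choose_le_two_mul_choose_succ {p : ℕ} (hp : 1 ≤ p) :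
    (2 * p).choose p ≤ 2 * (2 * p).choose (p + 1) := by
  have h := choose_succ_right_eq (2 * p) p
  rw [show 2 * p - p = p by omega] at h
  refine Nat.le_of_mul_le_mul_right (c := p + 1) ?_ (by omega)
  nlinarith

lemma three_mul_choose_mul_choose_le_of_even_even {p q : ℕ} (hp : 1 ≤ p) (hq : 1 ≤ q) :
    3 * ((2 * p).choose p * (2 * q).choose q) ≤ 2 * (2 * p + 2 * q).choose (p + q) := by
  have hs := sum_choose_mul_choose_le_add_choose (m := 2 * p) (n := 2 * q) (k := p + q)
    (s := {(p - 1, q + 1), (p, q), (p + 1, q - 1)})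
    (by grind [HasAntidiagonal.mem_antidiagonal])
  rw [sum_insert (by simp), sum_pair (by simp),
    choose_symm_of_eq_add (show 2 * p = (p - 1) + (p + 1) by omega),
    choose_symm_of_eq_add (show 2 * q = (q - 1) + (q + 1) by omega)] at hs
  have := choose_le_two_mul_choose_succ hp
  have := choose_le_two_mul_choose_succ hq
  nlinarith

lemma three_mul_choose_mul_choose_le_of_even_odd {p : ℕ} (hp : 1 ≤ p) (q : ℕ) :
    3 * ((2 * p).choose p * (2 * q + 1).choose q) ≤
      2 * (2 * p + (2 * q + 1)).choose (p + q) := by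
  have hs := sum_choose_mul_choose_le_add_choose (m := 2 * p) (n := 2 * q + 1) (k := p + q)
    (s := {(p, q), (p - 1, q + 1)}) (by grind [HasAntidiagonal.mem_antidiagonal])
  rw [sum_pair (by simp), choose_symm_half,
    choose_symm_of_eq_add (show 2 * p = (p - 1) + (p + 1) by omega)] at hs
  have := choose_le_two_mul_choose_succ hp
  nlinarith

lemma three_mul_choose_mul_choose_le_of_odd_odd (p q : ℕ) :
    3 * ((2 * p + 1).choose p * (2 * q + 1).choose q) ≤
      2 * (2 * p + 1 + (2 * q + 1)).choose (p + q + 1) := by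
  have hs := sum_choose_mul_choose_le_add_choose (m := 2 * p + 1) (n := 2 * q + 1)
    (k := p + q + 1) (s := {(p, q + 1), (p + 1, q)})
    (by grind [HasAntidiagonal.mem_antidiagonal])
  rw [sum_pair (by simp)] at hs
  dsimp only at hs
  rw [choose_symm_half, choose_symm_half] at hs
  omega

lemma three_mul_choose_half_mul_choose_half_le {a b : ℕ} (ha : 1 ≤ a) (hb : 1 ≤ b) :
    3 * (a.choose (a / 2) * b.choose (b / 2)) ≤ 2 * (a + b).choose ((a + b) / 2) := by
  rcases even_or_odd' a with ⟨p, rfl | rfl⟩ <;> rcases even_or_odd' b with ⟨q, rfl | rfl⟩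
  · rw [show (2 * p + 2 * q) / 2 = p + q by omega, show 2 * p / 2 = p by omega,
      show 2 * q / 2 = q by omega]
    exact three_mul_choose_mul_choose_le_of_even_even (by omega) (by omega)
  · rw [show (2 * p + (2 * q + 1)) / 2 = p + q by omega, show 2 * p / 2 = p by omega,
      show (2 * q + 1) / 2 = q by omega]
    exact three_mul_choose_mul_choose_le_of_even_odd (by omega) q
  · rw [show (2 * p + 1 + 2 * q) / 2 = q + p by omega, show 2 * q / 2 = q by omega,
      show (2 * p + 1) / 2 = p by omega, add_comm (2 * p + 1), mul_comm ((2 * p + 1).choose p)]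
    exact three_mul_choose_mul_choose_le_of_even_odd (by omega) p
  · rw [show (2 * p + 1 + (2 * q + 1)) / 2 = p + q + 1 by omega,
      show (2 * p + 1) / 2 = p by omega, show (2 * q + 1) / 2 = q by omega]
    exact three_mul_choose_mul_choose_le_of_odd_odd p q

end Nat

lemma min_le_sqrt_of_mul_le {x y c : ℝ} (h : x * y ≤ c) : min x y ≤ √c := by
  rcases lt_or_ge (min x y) 0 with hneg | hnonneg
  · exact hneg.le.trans (Real.sqrt_nonneg c)
  refine (le_abs_self _).trans (Real.abs_le_sqrt ?_)
  calc min x y ^ 2 = min x y * min x y := sq _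
    _ ≤ x * y := mul_le_mul (min_le_left x y) (min_le_right x y) hnonneg
        (hnonneg.trans (min_le_left x y))
    _ ≤ c := h

namespace Polynomial

theorem supNorm_mul_supNorm_le {g₁ g₂ : ℂ[X]} (h₁ : 1 ≤ g₁.natDegree) (h₂ : 1 ≤ g₂.natDegree) :
    g₁.supNorm * g₂.supNorm ≤
      2 / 3 * ((g₁ * g₂).natDegree.choose ((g₁ * g₂).natDegree / 2)) *
        (g₁ * g₂).mahlerMeasure := by
  set n₁ := g₁.natDegree
  set n₂ := g₂.natDegree
  have hcomb : (n₁.choose (n₁ / 2) : ℝ) * n₂.choose (n₂ / 2) ≤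
      2 / 3 * (n₁ + n₂).choose ((n₁ + n₂) / 2) := by
    have h : (3 : ℝ) * (n₁.choose (n₁ / 2) * n₂.choose (n₂ / 2)) ≤
        2 * (n₁ + n₂).choose ((n₁ + n₂) / 2) := by
      exact_mod_cast Nat.three_mul_choose_half_mul_choose_half_le h₁ h₂
    linarith
  rw [natDegree_mul (ne_zero_of_natDegree_gt h₁) (ne_zero_of_natDegree_gt h₂), mahlerMeasure_mul]
  calc g₁.supNorm * g₂.supNorm
      ≤ (n₁.choose (n₁ / 2) * g₁.mahlerMeasure) * (n₂.choose (n₂ / 2) * g₂.mahlerMeasure) :=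
        mul_le_mul g₁.supNorm_le_choose_natDegree_div_two_mul_mahlerMeasure
          g₂.supNorm_le_choose_natDegree_div_two_mul_mahlerMeasure g₂.supNorm_nonneg
          (mul_nonneg (Nat.cast_nonneg _) g₁.mahlerMeasure_nonneg)
    _ = (n₁.choose (n₁ / 2) * n₂.choose (n₂ / 2)) * (g₁.mahlerMeasure * g₂.mahlerMeasure) := by
        ring
    _ ≤ _ := mul_le_mul_of_nonneg_right hcomb
        (mul_nonneg g₁.mahlerMeasure_nonneg g₂.mahlerMeasure_nonneg)

end Polynomial

lemma ht_eq_supNorm (p : ℂ[X]) : ht p = p.supNorm :=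
  p.supNorm_eq_iSup.symm

lemma mahlerMeasure_eq_polynomial_mahlerMeasure_s7 (p : ℂ[X]) :
    _root_.mahlerMeasure p = p.mahlerMeasure :=
  (p.mahlerMeasure_eq_leadingCoeff_mul_prod_roots).symm

/-- Mignotte-type single factor bound: for a nontrivial factorization `f = g₁ g₂`
of degree `d`, `ht(g₁)·ht(g₂) ≤ (2/3)·C(d,⌊d/2⌋)·M(f)`, hence
`min(ht g₁, ht g₂) ≤ sqrt((2/3)·C(d,⌊d/2⌋)·M(f))`. -/
theorem single_factor_bound (g1 g2 : Polynomial ℂ)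
    (h1 : 1 ≤ g1.natDegree) (h2 : 1 ≤ g2.natDegree)
    (f : Polynomial ℂ) (hf : f = g1 * g2) (d : ℕ) (hd : f.natDegree = d) :
    ht g1 * ht g2 ≤ (2 / 3) * (d.choose (d / 2)) * _root_.mahlerMeasure f ∧
    min (ht g1) (ht g2) ≤ Real.sqrt ((2 / 3) * (d.choose (d / 2)) * _root_.mahlerMeasure f) := by
  subst hf hd
  have hprod : ht g1 * ht g2 ≤ (2 / 3) * ((g1 * g2).natDegree.choose ((g1 * g2).natDegree / 2))
      * _root_.mahlerMeasure (g1 * g2) := by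
    rw [ht_eq_supNorm, ht_eq_supNorm, mahlerMeasure_eq_polynomial_mahlerMeasure_s7]
    exact supNorm_mul_supNorm_le h1 h2
  exact ⟨hprod, min_le_sqrt_of_mul_le hprod⟩
end

section
/- Let n > 1 be an integer, g1 = n·x^2 − (2n−1)·x + n and g2 = (x^{n+1}+x^n+⋯+1)·(x^{n+2}+x^{n+1}+⋯+1) in ℤ[x]. Then the height of the product g1·g2 equals n+1, while ht(g2) = n+2. -/
open Polynomial

private lemma coeff_sum_range' (M k : ℕ) :
    (∑ i ∈ Finset.range M, (X:ℤ[X]) ^ i).coeff k = if k < M then 1 else 0 := by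
  simp [finset_sum_coeff, coeff_X_pow, Finset.sum_ite_eq, Finset.mem_range]

private def cnt (n m : ℕ) : ℕ :=
  ((Finset.range (m+1)).filter (fun i => i < n+2 ∧ m - i < n+3)).card

private lemma coeff_g2 (n m : ℕ) :
    ((∑ i ∈ Finset.range (n+2), (X:ℤ[X])^i) * (∑ i ∈ Finset.range (n+3), X^i)).coeff m
      = (cnt n m : ℤ) := by
  rw [coeff_mul, Finset.Nat.sum_antidiagonal_eq_sum_range_succ_mk]
  simp only [coeff_sum_range']
  rw [cnt, Finset.card_filter]
  push_cast
  refine Finset.sum_congr rfl fun i hi => ?_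
  by_cases h1 : i < n+2 <;> by_cases h2 : m - i < n+3 <;> simp [h1, h2]

private lemma cnt_le (n m : ℕ) : cnt n m ≤ n + 2 := by
  have : ((Finset.range (m+1)).filter (fun i => i < n+2 ∧ m - i < n+3)) ⊆ Finset.range (n+2) := by
    intro i hi
    simp only [Finset.mem_filter, Finset.mem_range] at *
    omega
  exact le_trans (Finset.card_le_card this) (by simp)

private lemma cnt_eq_full (n m : ℕ) (h1 : m ≤ n + 2) (h2 : n + 1 ≤ m) : cnt n m = n + 2 := by
  rw [cnt]
  have : ((Finset.range (m+1)).filter (fun i => i < n+2 ∧ m - i < n+3)) = Finset.range (n+2) := by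
    ext i
    simp only [Finset.mem_filter, Finset.mem_range]
    omega
  rw [this, Finset.card_range]

private lemma cnt_n (n : ℕ) : cnt n n = n + 1 := by
  rw [cnt]
  have : ((Finset.range (n+1)).filter (fun i => i < n+2 ∧ n - i < n+3)) = Finset.range (n+1) := by
    ext i
    simp only [Finset.mem_filter, Finset.mem_range]
    omega
  rw [this, Finset.card_range]

private lemma cnt_small (n m : ℕ) (h1 : m ≠ n+1) (h2 : m ≠ n+2) : cnt n m ≤ n + 1 := by
  rcases le_or_gt m n with h | h
  · calc cnt n m ≤ (Finset.range (m+1)).card := Finset.card_filter_le _ _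
      _ ≤ n + 1 := by simp; omega
  · have hm : n + 3 ≤ m := by omega
    have hsub : ((Finset.range (m+1)).filter (fun i => i < n+2 ∧ m - i < n+3))
        ⊆ Finset.Icc (m - n - 2) (n+1) := by
      intro i hi
      simp only [Finset.mem_filter, Finset.mem_range, Finset.mem_Icc] at *
      omega
    calc cnt n m ≤ (Finset.Icc (m - n - 2) (n+1)).card := Finset.card_le_card hsub
      _ ≤ n + 1 := by rw [Nat.card_Icc]; omega

private lemma cnt_zero (n m : ℕ) (h : 2*n + 4 ≤ m) : cnt n m = 0 := by
  rw [cnt, Finset.card_eq_zero, Finset.filter_eq_empty_iff]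
  intro i hi
  simp only [Finset.mem_range] at hi
  omega


/-- Height of an integer polynomial (as a real number). -/
noncomputable def htZ (p : Polynomial ℤ) : ℝ := ⨆ i, |(p.coeff i : ℝ)|

/-- With `g1 = n·x² − (2n−1)·x + n` and
`g2 = (x^{n+1}+⋯+1)(x^{n+2}+⋯+1)`, the product `g1·g2` has height `n+1`,
while `g2` has height `n+2`. -/
theorem family_ratio_gt_one (n : ℕ) (hn : 1 < n)
    (g1 g2 : Polynomial ℤ)
    (hg1 : g1 = C (n : ℤ) * X ^ 2 - C (2 * (n : ℤ) - 1) * X + C (n : ℤ))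
    (hg2 : g2 = (∑ i ∈ Finset.range (n + 2), X ^ i) * (∑ i ∈ Finset.range (n + 3), X ^ i)) :
    htZ (g1 * g2) = (n : ℝ) + 1 ∧ htZ g2 = (n : ℝ) + 2 := by
  -- coefficients of g2
  have hc2 : ∀ m, g2.coeff m = (cnt n m : ℤ) := by
    intro m; rw [hg2]; exact coeff_g2 n m
  -- product identity
  have peq : g1 * g2 = C (n:ℤ) * X^(2*n+5) - C (n:ℤ) * X^(n+3) - C (n:ℤ) * X^(n+2)
      + C (n:ℤ) + X * g2 := by
    have h1 := geom_sum_mul (X:ℤ[X]) (n+2)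
    have h2 := geom_sum_mul (X:ℤ[X]) (n+3)
    have hC : C (2 * (n : ℤ) - 1) = 2 * C (n:ℤ) - 1 := by simp [map_sub, map_mul]
    have key : ((X:ℤ[X])-1)^2 * g2 = (X^(n+2)-1)*(X^(n+3)-1) := by
      rw [hg2]
      calc ((X:ℤ[X])-1)^2 * ((∑ i ∈ Finset.range (n + 2), X ^ i) * (∑ i ∈ Finset.range (n + 3), X ^ i))
          = ((∑ i ∈ Finset.range (n + 2), (X:ℤ[X]) ^ i) * (X-1)) * ((∑ i ∈ Finset.range (n + 3), X ^ i) * (X-1)) := by ring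
        _ = (X^(n+2)-1)*(X^(n+3)-1) := by rw [h1, h2]
    have hg1' : g1 = C (n:ℤ) * (X-1)^2 + X := by rw [hg1, hC]; ring
    have hsplit : g1 * g2 = C (n:ℤ) * (((X:ℤ[X])-1)^2 * g2) + X * g2 := by rw [hg1']; ring
    rw [hsplit, key]; ring
  -- coefficients of the product
  have hp : ∀ k, (g1 * g2).coeff k =
      (n:ℤ) * ((if k = 2*n+5 then 1 else 0) - (if k = n+3 then 1 else 0)
        - (if k = n+2 then 1 else 0) + (if k = 0 then 1 else 0))
      + (if k = 0 then 0 else (cnt n (k-1) : ℤ)) := by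
    intro k
    rw [peq]
    have hXg2 : (X * g2).coeff k = (if k = 0 then 0 else (cnt n (k-1) : ℤ)) := by
      cases k with
      | zero => simp [coeff_X_mul_zero]
      | succ m => simp [coeff_X_mul, hc2]
    simp only [coeff_add, coeff_sub, coeff_C_mul, coeff_X_pow, coeff_C, hXg2]
    split_ifs <;> ring
  -- integer bound for the product coefficients
  have pbound : ∀ k, |(g1 * g2).coeff k| ≤ (n:ℤ) + 1 := by
    intro k
    rw [hp k, abs_le]
    by_cases h0 : k = 0
    · subst h0; simp; omega
    by_cases h2 : k = n+2
    · subst h2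
      have := cnt_eq_full n (n+1) (by omega) (by omega)
      simp only [if_neg (by omega : n+2 ≠ 2*n+5), if_neg (by omega : n+2 ≠ n+3),
        if_pos rfl, if_neg (by omega : n+2 ≠ 0)]
      have : cnt n (n+2-1) = n+2 := by simpa using this
      rw [this]; simp; omega
    by_cases h3 : k = n+3
    · subst h3
      have := cnt_eq_full n (n+2) (by omega) (by omega)
      simp only [if_neg (by omega : n+3 ≠ 2*n+5), if_pos rfl,
        if_neg (by omega : n+3 ≠ n+2), if_neg (by omega : n+3 ≠ 0)]
      have : cnt n (n+3-1) = n+2 := by simpa using this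
      rw [this]; simp; omega
    by_cases h5 : k = 2*n+5
    · subst h5
      have hz : cnt n (2*n+5-1) = 0 := cnt_zero n (2*n+4) (by omega)
      simp only [if_pos rfl, if_neg (by omega : 2*n+5 ≠ n+3),
        if_neg (by omega : 2*n+5 ≠ n+2), if_neg (by omega : 2*n+5 ≠ 0), hz]
      simp; omega
    · have hb := cnt_small n (k-1) (by omega) (by omega)
      simp only [if_neg h5, if_neg h3, if_neg h2, if_neg h0]
      have : ((cnt n (k-1) : ℤ)) ≤ (n:ℤ) + 1 := by exact_mod_cast hb
      have hnn : (0:ℤ) ≤ (cnt n (k-1) : ℤ) := Int.natCast_nonneg _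
      constructor <;> omega
  -- real bounds
  have pboundR : ∀ k, |((g1 * g2).coeff k : ℝ)| ≤ (n:ℝ) + 1 := by
    intro k
    rw [← Int.cast_abs]
    exact_mod_cast pbound k
  have g2boundR : ∀ k, |(g2.coeff k : ℝ)| ≤ (n:ℝ) + 2 := by
    intro k
    rw [hc2 k]
    have := cnt_le n k
    rw [abs_of_nonneg (by positivity)]
    exact_mod_cast this
  constructor
  · refine le_antisymm (ciSup_le pboundR) ?_
    have bdd : BddAbove (Set.range fun i => |((g1 * g2).coeff i : ℝ)|) :=
      ⟨(n:ℝ)+1, by rintro _ ⟨i, rfl⟩; exact pboundR i⟩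
    have hval : (g1 * g2).coeff (n+1) = (n:ℤ) + 1 := by
      rw [hp (n+1)]
      have : cnt n (n+1-1) = n+1 := by simpa using cnt_n n
      simp only [if_neg (by omega : n+1 ≠ 2*n+5), if_neg (by omega : n+1 ≠ n+3),
        if_neg (by omega : n+1 ≠ n+2), if_neg (by omega : n+1 ≠ 0), this]
      push_cast; ring
    have := le_ciSup bdd (n+1)
    rw [hval] at this
    calc (n:ℝ) + 1 = |(((n:ℤ)+1 : ℤ) : ℝ)| := by
          rw [abs_of_nonneg (by positivity)]; push_cast; ring
      _ ≤ _ := this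
  · refine le_antisymm (ciSup_le g2boundR) ?_
    have bdd : BddAbove (Set.range fun i => |(g2.coeff i : ℝ)|) :=
      ⟨(n:ℝ)+2, by rintro _ ⟨i, rfl⟩; exact g2boundR i⟩
    have hval : g2.coeff (n+1) = (n:ℤ) + 2 := by
      rw [hc2 (n+1), cnt_eq_full n (n+1) (by omega) (by omega)]; push_cast; ring
    have := le_ciSup bdd (n+1)
    rw [hval] at this
    calc (n:ℝ) + 2 = |(((n:ℤ)+2 : ℤ) : ℝ)| := by
          rw [abs_of_nonneg (by positivity)]; push_cast; ring
      _ ≤ _ := this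
end

section
/- For every positive integer n, the polynomial f = Π_{k=1}^{n} (x^{2^{k−1}} − 1) ∈ ℤ[x] has height 1, has degree 2^n − 1, and is divisible by (x−1)^n. -/
/-!
Multiplying a polynomial `p` with `natDegree p < m` by `X ^ m - 1` juxtaposes `-p` and a copy of
`p` shifted by `m`, without overlap, so no coefficient grows in absolute value. By induction all
coefficients of the product lie in `{-1, 0, 1}`, and the constant one is `(-1) ^ n`. The degree is
`1 + 2 + ⋯ + 2 ^ (n - 1)`, and every factor is divisible by `X - 1`.
-/

open Polynomial

open Finset

theorem htZ_eq_of_abs_coeff_le {p : ℤ[X]} {B : ℤ} (hle : ∀ i, |p.coeff i| ≤ B)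
    {j : ℕ} (hj : |p.coeff j| = B) : htZ p = B := by
  have hle' : ∀ i, |(p.coeff i : ℝ)| ≤ B := fun i => by exact_mod_cast hle i
  refine le_antisymm (ciSup_le hle') ?_
  calc (B : ℝ) = |(p.coeff j : ℝ)| := by exact_mod_cast hj.symm
    _ ≤ htZ p := le_ciSup (f := fun i => |(p.coeff i : ℝ)|) ⟨B, Set.forall_mem_range.2 hle'⟩ j

section CommRing

variable {R : Type*} [CommRing R]

theorem X_sub_one_pow_dvd_prod_X_pow_sub_one (s : Finset ℕ) (e : ℕ → ℕ) :
    (X - 1 : R[X]) ^ #s ∣ ∏ k ∈ s, (X ^ e k - 1) := by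
  rw [← prod_const]
  exact prod_dvd_prod_of_dvd _ _ fun k _ => sub_one_dvd_pow_sub_one X (e k)

theorem coeff_zero_prod_X_pow_sub_one (s : Finset ℕ) (e : ℕ → ℕ) (he : ∀ k ∈ s, e k ≠ 0) :
    (∏ k ∈ s, (X ^ e k - 1 : R[X])).coeff 0 = (-1) ^ #s := by
  rw [coeff_zero_eq_eval_zero, eval_prod, ← prod_const]
  refine prod_congr rfl fun k hk => ?_
  simp [zero_pow (he k hk)]

theorem natDegree_prod_X_pow_two_pow_sub_one [Nontrivial R] (n : ℕ) :
    (∏ k ∈ range n, (X ^ 2 ^ k - 1 : R[X])).natDegree = 2 ^ n - 1 := by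
  have hmonic (k : ℕ) : (X ^ 2 ^ k - 1 : R[X]).Monic := by
    simpa using monic_X_pow_sub_C (1 : R) (pow_ne_zero k two_ne_zero)
  rw [natDegree_prod_of_monic _ _ fun k _ => hmonic k]
  have hdeg (k : ℕ) : (X ^ 2 ^ k - 1 : R[X]).natDegree = 2 ^ k := by
    rw [← C_1, natDegree_X_pow_sub_C]
  simp [hdeg, Nat.geomSum_eq le_rfl n]

theorem coeff_mul_X_pow_sub_one (p : R[X]) (m i : ℕ) :
    (p * (X ^ m - 1)).coeff i = (if m ≤ i then p.coeff (i - m) else 0) - p.coeff i := by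
  rw [mul_sub, mul_one, coeff_sub, coeff_mul_X_pow']

end CommRing

section Ordered

variable {R : Type*} [CommRing R] [LinearOrder R]

theorem abs_coeff_mul_X_pow_sub_one_le {p : R[X]} {m : ℕ} {B : R} (hdeg : p.natDegree < m)
    (hB : ∀ i, |p.coeff i| ≤ B) (i : ℕ) : |(p * (X ^ m - 1)).coeff i| ≤ B := by
  rw [coeff_mul_X_pow_sub_one]
  split_ifs with hi
  · rw [coeff_eq_zero_of_natDegree_lt (hdeg.trans_le hi), sub_zero]
    exact hB _
  · rw [zero_sub, abs_neg]
    exact hB i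

theorem abs_coeff_prod_X_pow_two_pow_sub_one_le [IsStrictOrderedRing R] (n i : ℕ) :
    |(∏ k ∈ range n, (X ^ 2 ^ k - 1 : R[X])).coeff i| ≤ 1 := by
  induction n generalizing i with
  | zero =>
    rw [prod_range_zero, coeff_one]
    split_ifs <;> simp
  | succ n ih =>
    rw [prod_range_succ]
    refine abs_coeff_mul_X_pow_sub_one_le ?_ ih i
    rw [natDegree_prod_X_pow_two_pow_sub_one]
    exact Nat.sub_lt (Nat.two_pow_pos n) one_pos

end Ordered

theorem height_one_multiple_of_power_general (n : ℕ)
    (f : Polynomial ℤ) (hf : f = ∏ k ∈ Finset.range n, (X ^ (2 ^ k) - 1)) :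
    htZ f = 1 ∧ f.natDegree = 2 ^ n - 1 ∧ (X - 1) ^ n ∣ f := by
  subst hf
  refine ⟨?_, natDegree_prod_X_pow_two_pow_sub_one n, ?_⟩
  · have hcoeff_zero := coeff_zero_prod_X_pow_sub_one (R := ℤ) (range n) (2 ^ ·)
      fun k _ => pow_ne_zero k two_ne_zero
    exact_mod_cast htZ_eq_of_abs_coeff_le (abs_coeff_prod_X_pow_two_pow_sub_one_le n)
      (j := 0) (by simp [hcoeff_zero])
  · simpa using X_sub_one_pow_dvd_prod_X_pow_sub_one (R := ℤ) (range n) (2 ^ ·)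

/-- For every `n ≥ 1`, the polynomial `f = Π_{k=1}^{n} (x^{2^{k−1}} − 1)` has
height `1`, degree `2^n − 1`, and is divisible by `(x−1)^n`. -/
theorem height_one_multiple_of_power (n : ℕ) (hn : 1 ≤ n)
    (f : Polynomial ℤ) (hf : f = ∏ k ∈ Finset.range n, (X ^ (2 ^ k) - 1)) :
    htZ f = 1 ∧ f.natDegree = 2 ^ n - 1 ∧ (X - 1) ^ n ∣ f :=
  height_one_multiple_of_power_general n f hf
end

section
/- Let f ∈ ℤ[x] and g ∈ ℤ[x] divide f with deg g = δ ≥ 1, and suppose ρ > 0 is an upper bound on the absolute values of all complex roots of f. If |lc(g)| ≤ |lc(f)|, then for each 0 ≤ i ≤ δ the absolute value of the coefficient of x^i in g is at most |lc(f)| · C(δ, i) · ρ^{δ−i} (the binomial bound). -/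
/-! The roots of `g` are roots of `f`, hence bounded by `ρ`. By Vieta, the coefficient of `x^i`
in `g / lc(g)` is, up to sign, the elementary symmetric function of degree `δ - i` in these roots,
a sum of `C(δ, i)` products each of norm at most `ρ^(δ-i)`. -/

open Polynomial

namespace Polynomial

variable {K : Type*} [NormedField K]

theorem norm_coeff_le_of_roots_le {p : K[X]} {B : ℝ} (hsplit : p.Splits)
    (hroots : ∀ z ∈ p.roots, ‖z‖ ≤ B) (i : ℕ) :
    ‖p.coeff i‖ ≤ ‖p.leadingCoeff‖ * p.natDegree.choose i * B ^ (p.natDegree - i) := by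
  rcases eq_or_ne p 0 with rfl | hp
  · simp
  have hlc : p.leadingCoeff ≠ 0 := leadingCoeff_ne_zero.mpr hp
  set q := C p.leadingCoeff⁻¹ * p with hq
  have hqmonic : q.Monic := by
    rw [Monic, leadingCoeff_mul, leadingCoeff_C, inv_mul_cancel₀ hlc]
  have hqdeg : q.natDegree = p.natDegree := natDegree_C_mul (inv_ne_zero hlc)
  have hbound := coeff_le_of_roots_le (f := RingHom.id K) i hqmonic
    (by rw [map_id]; exact hsplit.C_mul _)
    (by rw [map_id, hq, roots_C_mul _ (inv_ne_zero hlc)]; exact hroots)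
  rw [map_id, hqdeg] at hbound
  have hcoeff : p.coeff i = p.leadingCoeff * q.coeff i := by
    rw [hq, coeff_C_mul, mul_inv_cancel_left₀ hlc]
  calc ‖p.coeff i‖ = ‖p.leadingCoeff‖ * ‖q.coeff i‖ := by rw [hcoeff, norm_mul]
    _ ≤ ‖p.leadingCoeff‖ * (B ^ (p.natDegree - i) * p.natDegree.choose i) := by gcongr
    _ = _ := by ring

end Polynomial

theorem binomial_bound_general (f g : Polynomial ℤ) (hdvd : g ∣ f)
    (δ : ℕ) (hδ : g.natDegree = δ)
    (ρ : ℝ) (hρ : 0 < ρ)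
    (hroots : ∀ α : ℂ, (f.map (Int.castRingHom ℂ)).eval α = 0 → ‖α‖ ≤ ρ)
    (hlc : |g.leadingCoeff| ≤ |f.leadingCoeff|) :
    ∀ i ≤ δ, |(g.coeff i : ℝ)| ≤ |(f.leadingCoeff : ℝ)| * (δ.choose i) * ρ ^ (δ - i) := by
  intro i _
  set G := g.map (Int.castRingHom ℂ)
  have hGdeg : G.natDegree = δ := by
    rw [natDegree_map_eq_of_injective (RingHom.injective_int _), hδ]
  have hGroots : ∀ z ∈ G.roots, ‖z‖ ≤ ρ := fun z hz ↦
    hroots z (eval_eq_zero_of_dvd_of_eval_eq_zero (map_dvd _ hdvd) (isRoot_of_mem_roots hz))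
  have hbound := norm_coeff_le_of_roots_le (IsAlgClosed.splits G) hGroots i
  rw [hGdeg, coeff_map, leadingCoeff_map_of_injective (RingHom.injective_int _)] at hbound
  simp only [eq_intCast, Complex.norm_intCast] at hbound
  have hlcℝ : |(g.leadingCoeff : ℝ)| ≤ |(f.leadingCoeff : ℝ)| := by exact_mod_cast hlc
  calc |(g.coeff i : ℝ)| ≤ |(g.leadingCoeff : ℝ)| * δ.choose i * ρ ^ (δ - i) := hbound
    _ ≤ |(f.leadingCoeff : ℝ)| * δ.choose i * ρ ^ (δ - i) := by gcongr

/-- The binomial bound: if `g ∣ f` in `ℤ[x]`, `deg g = δ ≥ 1`, every complex root of `f`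
has absolute value at most `ρ > 0`, and `|lc(g)| ≤ |lc(f)|`, then
`|coeff i g| ≤ |lc(f)| · C(δ,i) · ρ^{δ−i}` for `0 ≤ i ≤ δ`. -/
theorem binomial_bound (f g : Polynomial ℤ) (hdvd : g ∣ f)
    (δ : ℕ) (hδ : g.natDegree = δ) (hδ1 : 1 ≤ δ)
    (ρ : ℝ) (hρ : 0 < ρ)
    (hroots : ∀ α : ℂ, (f.map (Int.castRingHom ℂ)).eval α = 0 → ‖α‖ ≤ ρ)
    (hlc : |g.leadingCoeff| ≤ |f.leadingCoeff|) :
    ∀ i ≤ δ, |(g.coeff i : ℝ)| ≤ |(f.leadingCoeff : ℝ)| * (δ.choose i) * ρ ^ (δ - i) :=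
  binomial_bound_general f g hdvd δ hδ ρ hρ hroots hlc
end

section
/- Let p be an odd prime and f ∈ ℤ[x] irreducible. If f(0)/lc(f) is not a p-th power in ℚ, then f(x^p) is irreducible in ℤ[x]. -/
/-!
Over `ℚ`, let `α` be a root of the monic associate `g` of `f`. Then `g(X ^ p)` is irreducible as
soon as `X ^ p - α` is irreducible over `ℚ(α)`, which for `p` prime holds unless `α` is a `p`-th
power in `ℚ(α)`. If `α = β ^ p`, taking norms gives `(-1) ^ deg g * g(0) = N(β) ^ p`, and since `p` is odd, `g(0) = f(0) / lc(f)` is the `p`-th power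
`((-1) ^ deg g * N(β)) ^ p`. Gauss's lemma moves irreducibility between `ℤ[X]` and `ℚ[X]`, which
applies because irreducible nonconstant integer polynomials and their expansions are primitive.
-/

open Polynomial IntermediateField

namespace Polynomial

theorem IsPrimitive.expand {R : Type*} [CommRing R] {f : R[X]} (hf : f.IsPrimitive) {p : ℕ}
    (hp : 0 < p) : (expand R p f).IsPrimitive := by
  intro r hr
  refine hf r (C_dvd_iff_dvd_coeff r f |>.mpr fun n => ?_)
  simpa [coeff_expand_mul hp] using (C_dvd_iff_dvd_coeff r _).mp hr (n * p)

variable {K : Type*} [Field K] {p : ℕ}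

theorem Monic.irreducible_comp_X_pow_of_prime (hp : p.Prime) (hodd : Odd p) {g : K[X]}
    (hmonic : g.Monic) (hg : Irreducible g) (hpow : ∀ b : K, b ^ p ≠ g.coeff 0) :
    Irreducible (g.comp (X ^ p)) := by
  refine irreducible_comp hmonic (monic_X_pow p) hg fun E _ _ x hx => ?_
  have hint : IsIntegral K x := by
    by_contra h
    exact hg.ne_zero (hx.symm.trans (minpoly.eq_zero h))
  have := (adjoin.powerBasis hint).finite
  rw [Polynomial.map_pow, map_X]
  refine X_pow_sub_C_irreducible_of_prime hp fun b hb =>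
    hpow ((-1) ^ g.natDegree * Algebra.norm K b) ?_
  rw [mul_pow, ← map_pow, hb, ← adjoin.powerBasis_gen hint,
    Algebra.PowerBasis.norm_gen_eq_coeff_zero_minpoly, adjoin.powerBasis_dim,
    adjoin.powerBasis_gen, minpoly_gen, hx, ← pow_mul, pow_mul', hodd.neg_one_pow, ← mul_assoc,
    ← mul_pow, neg_one_mul, neg_neg, one_pow, one_mul]

theorem Irreducible.comp_X_pow_of_prime (hp : p.Prime) (hodd : Odd p) {g : K[X]}
    (hg : Irreducible g) (hpow : ∀ b : K, b ^ p ≠ g.coeff 0 / g.leadingCoeff) :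
    Irreducible (g.comp (X ^ p)) := by
  have hmonic : (g * C g.leadingCoeff⁻¹).Monic := monic_mul_leadingCoeff_inv hg.ne_zero
  have h := hmonic.irreducible_comp_X_pow_of_prime hp hodd
    (irreducible_mul_leadingCoeff_inv.mpr hg) (by simpa [div_eq_mul_inv] using hpow)
  rw [mul_comp, C_comp] at h
  exact (associated_mul_unit_right _ _
    (isUnit_C.mpr (inv_ne_zero (leadingCoeff_ne_zero.mpr hg.ne_zero)).isUnit)).symm.irreducible h

end Polynomial

/-- If `p` is an odd prime, `f ∈ ℤ[x]` is irreducible, and `f(0)/lc(f)` is not a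
`p`-th power in `ℚ`, then `f(x^p)` is irreducible in `ℤ[x]`. -/
theorem comp_xpow_prime_irreducible (p : ℕ) (hp : p.Prime) (hodd : Odd p)
    (f : Polynomial ℤ) (hf : Irreducible f)
    (hnp : ¬ ∃ q : ℚ, q ^ p = (f.coeff 0 : ℚ) / (f.leadingCoeff : ℚ)) :
    Irreducible (f.comp (X ^ p)) := by
  have hdeg : f.natDegree ≠ 0 := by
    intro h
    have hlc : f.leadingCoeff ≠ 0 := leadingCoeff_ne_zero.mpr hf.ne_zero
    rw [leadingCoeff, h] at hlc
    exact hnp ⟨1, by rw [leadingCoeff, h, div_self (by exact_mod_cast hlc), one_pow]⟩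
  have hprim : f.IsPrimitive := hf.isPrimitive hdeg
  rw [← expand_eq_comp_X_pow,
    IsPrimitive.Int.irreducible_iff_irreducible_map_cast (hprim.expand hp.pos), map_expand,
    expand_eq_comp_X_pow]
  have hirr : Irreducible (f.map (Int.castRingHom ℚ)) :=
    (IsPrimitive.Int.irreducible_iff_irreducible_map_cast hprim).mp hf
  refine hirr.comp_X_pow_of_prime hp hodd fun b hb => hnp ⟨b, ?_⟩
  rwa [coeff_map, leadingCoeff_map_of_injective (RingHom.injective_int _)] at hb
end

section
/- Let p be an odd prime and f ∈ ℤ[x] irreducible such that f(x^p) is also irreducible. Then f(x^{p^k}) is irreducible for every natural number k. -/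
/-! By Capelli's lemma, `F(X^{p^k})` is irreducible over a field `K` as soon as `F` is irreducible
and `X^{p^k} - α` is irreducible over `K(α)` for a root `α` of `F`; for odd `p` the latter holds
unless `α` is a `p`-th power in `K(α)`. A `p`-th root `β ∈ K(α)` of `α` is impossible: it is a root
of the irreducible `F(X^p)`, so its degree `p · deg F` would exceed `[K(α) : K] = deg F`.
Gauss's lemma carries this from the fraction field back to the GCD domain. -/
open Polynomial

namespace IntermediateField

theorem pow_ne_adjoinSimple_gen {K E : Type*} [Field K] [Field E] [Algebra K E] {x : E}
    {n : ℕ} (hn : 2 ≤ n) (hirr : Irreducible ((minpoly K x).comp (X ^ n))) (b : K⟮x⟯) :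
    b ^ n ≠ AdjoinSimple.gen K x := by
  intro hb
  have hx : IsIntegral K x := by
    by_contra h
    simp [minpoly.eq_zero h] at hirr
  have hmonic : ((minpoly K x).comp (X ^ n)).Monic :=
    (minpoly.monic hx).comp (monic_X_pow n) (by rw [natDegree_X_pow]; omega)
  have hroot : aeval b ((minpoly K x).comp (X ^ n)) = 0 := by
    rw [aeval_comp, map_pow, aeval_X, hb, ← minpoly_gen, minpoly.aeval]
  have := adjoin.finiteDimensional hx
  have hdeg := minpoly.natDegree_le (A := K) b
  rw [← minpoly.eq_of_irreducible_of_monic hirr hroot hmonic, natDegree_comp, natDegree_X_pow,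
    adjoin.finrank hx] at hdeg
  nlinarith [minpoly.natDegree_pos hx]

end IntermediateField

namespace Polynomial

theorem IsPrimitive.comp_X_pow {R : Type*} [CommSemiring R] {f : R[X]} (hf : f.IsPrimitive)
    {n : ℕ} (hn : n ≠ 0) : (f.comp (X ^ n)).IsPrimitive := by
  intro r hr
  refine hf r (C_dvd_iff_dvd_coeff _ _ |>.mpr fun i ↦ ?_)
  rw [← coeff_expand_mul' (Nat.pos_of_ne_zero hn), expand_eq_comp_X_pow]
  exact (C_dvd_iff_dvd_coeff _ _).mp hr _

theorem Monic.irreducible_comp_X_pow_prime_pow {K : Type*} [Field K] {p : ℕ} (hp : p.Prime)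
    (hp2 : p ≠ 2) {F : K[X]} (hFm : F.Monic) (hF : Irreducible F)
    (hFp : Irreducible (F.comp (X ^ p))) (k : ℕ) : Irreducible (F.comp (X ^ (p ^ k))) :=
  irreducible_comp hFm (monic_X_pow _) hF fun _ _ _ x hx ↦ by
    rw [Polynomial.map_pow, map_X]
    exact X_pow_sub_C_irreducible_of_prime_pow hp hp2 k
      (IntermediateField.pow_ne_adjoinSimple_gen hp.two_le (hx ▸ hFp))

theorem Irreducible.comp_X_pow_prime_pow_of_field {K : Type*} [Field K] {p : ℕ} (hp : p.Prime)
    (hp2 : p ≠ 2) {F : K[X]} (hF : Irreducible F)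
    (hFp : Irreducible (F.comp (X ^ p))) (k : ℕ) : Irreducible (F.comp (X ^ (p ^ k))) := by
  have hu : IsUnit (C F.leadingCoeff⁻¹) := isUnit_C.mpr (by simp [hF.ne_zero])
  have hassoc (n : ℕ) : Associated (F.comp (X ^ n)) ((F * C F.leadingCoeff⁻¹).comp (X ^ n)) := by
    rw [mul_comp, C_comp]
    exact associated_mul_unit_right _ _ hu
  refine (hassoc _).irreducible_iff.mpr <|
    (monic_mul_leadingCoeff_inv hF.ne_zero).irreducible_comp_X_pow_prime_pow hp hp2
      ((associated_mul_unit_right _ _ hu).irreducible hF) ((hassoc p).irreducible hFp) k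

theorem Irreducible.comp_X_pow_prime_pow_of_gcdMonoid {R : Type*} [CommRing R] [IsDomain R]
    [NormalizedGCDMonoid R] {p : ℕ} (hp : p.Prime) (hp2 : p ≠ 2) {f : R[X]} (hf : Irreducible f)
    (hfp : Irreducible (f.comp (X ^ p))) (k : ℕ) : Irreducible (f.comp (X ^ (p ^ k))) := by
  by_cases hdeg : f.natDegree = 0
  · obtain ⟨a, rfl⟩ := natDegree_eq_zero.mp hdeg
    rwa [C_comp]
  let K := FractionRing R
  have hprim := hf.isPrimitive hdeg
  have hgauss (n : ℕ) (hn : n ≠ 0) :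
      Irreducible (f.comp (X ^ n)) ↔ Irreducible ((f.map (algebraMap R K)).comp (X ^ n)) := by
    rw [(hprim.comp_X_pow hn).irreducible_iff_irreducible_map_fraction_map (K := K),
      Polynomial.map_comp, Polynomial.map_pow, map_X]
  exact (hgauss _ (pow_ne_zero k hp.ne_zero)).mpr <|
    (hprim.irreducible_iff_irreducible_map_fraction_map.mp hf).comp_X_pow_prime_pow_of_field hp hp2
      ((hgauss p hp.ne_zero).mp hfp) k

end Polynomial

/-- If `p` is an odd prime and both `f` and `f(x^p)` are irreducible in `ℤ[x]`,
then `f(x^{p^k})` is irreducible for every `k ∈ ℕ`. -/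
theorem comp_xpow_prime_pow_irreducible (p : ℕ) (hp : p.Prime) (hodd : Odd p)
    (f : Polynomial ℤ) (hf : Irreducible f) (hfp : Irreducible (f.comp (X ^ p))) :
    ∀ k : ℕ, Irreducible (f.comp (X ^ (p ^ k))) :=
  hf.comp_X_pow_prime_pow_of_gcdMonoid hp (by rintro rfl; exact absurd hodd (by decide)) hfp
end

section
/- Fix positive integers d1, d2 and let μ = inf { |g1·g2|_2 : g1, g2 ∈ ℝ[x], deg g1 = d1, deg g2 = d2, |g1|_2 = |g2|_2 = 1 }. Then μ > 0. -/
/-!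
Sending `a ∈ ℝ^(d+1)` to `∑ i, a i * X ^ i` identifies the Euclidean space with the real
polynomials of degree `≤ d`, and `l2NormR` with the Euclidean norm. Under this identification
`(g₁, g₂) ↦ l2NormR (g₁ * g₂)` is a continuous function on the compact product of two unit spheres,
and it does not vanish there since `ℝ[X]` has no zero divisors; its minimum is the positive lower
bound.
-/

open Polynomial

/-- The `l2`-norm of the coefficient vector of a real polynomial. -/
noncomputable def l2NormR (p : Polynomial ℝ) : ℝ :=
  Real.sqrt (∑ i ∈ Finset.range (p.natDegree + 1), (p.coeff i) ^ 2)

open Finset Metric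

theorem l2NormR_eq_sqrt_sum_range {p : ℝ[X]} {N : ℕ} (h : p.natDegree < N) :
    l2NormR p = √(∑ i ∈ range N, p.coeff i ^ 2) := by
  rw [l2NormR]
  congr 1
  refine sum_subset (range_subset_range.2 h) fun i _ hi ↦ ?_
  rw [coeff_eq_zero_of_natDegree_lt (by simpa using hi), sq, zero_mul]

@[simp]
theorem l2NormR_zero : l2NormR 0 = 0 := by
  simp [l2NormR]

theorem l2NormR_pos {p : ℝ[X]} (hp : p ≠ 0) : 0 < l2NormR p := by
  have hlead : 0 < p.coeff p.natDegree ^ 2 := pow_two_pos_of_ne_zero (leadingCoeff_ne_zero.2 hp)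
  exact Real.sqrt_pos.2 <| sum_pos' (fun i _ ↦ sq_nonneg _) ⟨_, self_mem_range_succ _, hlead⟩

@[simp]
theorem l2NormR_X_pow (n : ℕ) : l2NormR (X ^ n : ℝ[X]) = 1 := by
  rw [l2NormR, natDegree_X_pow, sum_eq_single_of_mem n (self_mem_range_succ n)]
  · simp
  · intro i _ hi
    simp [coeff_X_pow, hi]

/-- Identifies `ℝ^(d+1)` with the polynomials of degree `≤ d` via `a ↦ ∑ i, a i * X ^ i`. -/
noncomputable def ofCoeffs (d : ℕ) : EuclideanSpace ℝ (Fin (d + 1)) →ₗ[ℝ] ℝ[X] :=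
  (degreeLT ℝ (d + 1)).subtype ∘ₗ (degreeLTEquiv ℝ (d + 1)).symm.toLinearMap ∘ₗ
    (WithLp.linearEquiv 2 ℝ (Fin (d + 1) → ℝ)).toLinearMap

variable {d : ℕ}

theorem coeff_ofCoeffs (a : EuclideanSpace ℝ (Fin (d + 1))) (i : Fin (d + 1)) :
    (ofCoeffs d a).coeff i = a i :=
  congrFun ((degreeLTEquiv ℝ (d + 1)).apply_symm_apply (WithLp.ofLp a)) i

theorem natDegree_ofCoeffs_le (a : EuclideanSpace ℝ (Fin (d + 1))) :
    (ofCoeffs d a).natDegree ≤ d := by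
  have hmem : ofCoeffs d a ∈ degreeLE ℝ d :=
    degreeLT_succ_eq_degreeLE (R := ℝ) ▸ ((degreeLTEquiv ℝ (d + 1)).symm (WithLp.ofLp a)).2
  exact natDegree_le_of_degree_le (mem_degreeLE.1 hmem)

theorem exists_ofCoeffs_eq {p : ℝ[X]} (hp : p.natDegree ≤ d) : ∃ a, ofCoeffs d a = p := by
  have hmem : p ∈ degreeLT ℝ (d + 1) := by
    rw [degreeLT_succ_eq_degreeLE, mem_degreeLE]
    exact degree_le_of_natDegree_le hp
  refine ⟨WithLp.toLp 2 (degreeLTEquiv ℝ (d + 1) ⟨p, hmem⟩), ?_⟩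
  simp [ofCoeffs]

@[simp]
theorem l2NormR_ofCoeffs (a : EuclideanSpace ℝ (Fin (d + 1))) :
    l2NormR (ofCoeffs d a) = ‖a‖ := by
  rw [l2NormR_eq_sqrt_sum_range (Nat.lt_succ_of_le (natDegree_ofCoeffs_le a)),
    EuclideanSpace.norm_eq, ← Fin.sum_univ_eq_sum_range]
  simp [coeff_ofCoeffs]

theorem continuous_l2NormR_ofCoeffs_mul {d₁ d₂ : ℕ} :
    Continuous fun x : EuclideanSpace ℝ (Fin (d₁ + 1)) × EuclideanSpace ℝ (Fin (d₂ + 1)) ↦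
      l2NormR (ofCoeffs d₁ x.1 * ofCoeffs d₂ x.2) := by
  have hdeg (x : EuclideanSpace ℝ (Fin (d₁ + 1)) × EuclideanSpace ℝ (Fin (d₂ + 1))) :
      (ofCoeffs d₁ x.1 * ofCoeffs d₂ x.2).natDegree < d₁ + d₂ + 1 :=
    Nat.lt_succ_of_le (natDegree_mul_le.trans
      (add_le_add (natDegree_ofCoeffs_le _) (natDegree_ofCoeffs_le _)))
  simp_rw [l2NormR_eq_sqrt_sum_range (hdeg _), coeff_mul]
  have hcoeff (e j : ℕ) :
      Continuous fun a : EuclideanSpace ℝ (Fin (e + 1)) ↦ (ofCoeffs e a).coeff j :=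
    ((lcoeff ℝ j).comp (ofCoeffs e)).continuous_of_finiteDimensional
  exact Real.continuous_sqrt.comp <| continuous_finsetSum _ fun k _ ↦
    (continuous_finsetSum _ fun ij _ ↦ ((hcoeff d₁ ij.1).comp continuous_fst).mul
      ((hcoeff d₂ ij.2).comp continuous_snd)).pow 2

theorem exists_pos_le_l2NormR_mul (d₁ d₂ : ℕ) :
    ∃ c > 0, ∀ g₁ g₂ : ℝ[X], g₁.natDegree ≤ d₁ → g₂.natDegree ≤ d₂ →
      l2NormR g₁ = 1 → l2NormR g₂ = 1 → c ≤ l2NormR (g₁ * g₂) := by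
  obtain ⟨x, ⟨hx₁, hx₂⟩, hmin⟩ :=
    ((isCompact_sphere (0 : EuclideanSpace ℝ (Fin (d₁ + 1))) 1).prod
      (isCompact_sphere (0 : EuclideanSpace ℝ (Fin (d₂ + 1))) 1)).exists_isMinOn
    ((NormedSpace.sphere_nonempty.2 zero_le_one).prod (NormedSpace.sphere_nonempty.2 zero_le_one))
    (continuous_l2NormR_ofCoeffs_mul (d₁ := d₁) (d₂ := d₂)).continuousOn
  have hne {d : ℕ} {a : EuclideanSpace ℝ (Fin (d + 1))} (ha : a ∈ sphere 0 1) :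
      ofCoeffs d a ≠ 0 := by
    intro h
    have := l2NormR_ofCoeffs a
    rw [h, l2NormR_zero, mem_sphere_zero_iff_norm.1 ha] at this
    exact zero_ne_one this
  refine ⟨_, l2NormR_pos (mul_ne_zero (hne hx₁) (hne hx₂)), fun g₁ g₂ hg₁ hg₂ hn₁ hn₂ ↦ ?_⟩
  obtain ⟨a, rfl⟩ := exists_ofCoeffs_eq hg₁
  obtain ⟨b, rfl⟩ := exists_ofCoeffs_eq hg₂
  have ha : a ∈ sphere 0 1 := by rw [mem_sphere_zero_iff_norm, ← l2NormR_ofCoeffs, hn₁]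
  have hb : b ∈ sphere 0 1 := by rw [mem_sphere_zero_iff_norm, ← l2NormR_ofCoeffs, hn₂]
  exact isMinOn_iff.1 hmin (a, b) (Set.mk_mem_prod ha hb)

theorem rump_min_pos_general (d1 d2 : ℕ) :
    0 < sInf { r : ℝ | ∃ g1 g2 : Polynomial ℝ,
      g1.natDegree = d1 ∧ g2.natDegree = d2 ∧
      l2NormR g1 = 1 ∧ l2NormR g2 = 1 ∧ r = l2NormR (g1 * g2) } := by
  obtain ⟨c, hc, hle⟩ := exists_pos_le_l2NormR_mul d1 d2
  refine hc.trans_le (le_csInf ⟨1, X ^ d1, X ^ d2, by rw [← pow_add]; simp⟩ ?_)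
  rintro r ⟨g₁, g₂, rfl, rfl, hn₁, hn₂, rfl⟩
  exact hle g₁ g₂ le_rfl le_rfl hn₁ hn₂

/-- Rump's minimum: the infimum of `|g₁·g₂|₂` over real polynomials of fixed
degrees `d1, d2` with `|g₁|₂ = |g₂|₂ = 1` is strictly positive. -/
theorem rump_min_pos (d1 d2 : ℕ) (h1 : 1 ≤ d1) (h2 : 1 ≤ d2) :
    0 < sInf { r : ℝ | ∃ g1 g2 : Polynomial ℝ,
      g1.natDegree = d1 ∧ g2.natDegree = d2 ∧
      l2NormR g1 = 1 ∧ l2NormR g2 = 1 ∧ r = l2NormR (g1 * g2) } :=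
  rump_min_pos_general d1 d2
end

section
/- For fixed positive integers d1, d2 there exists a constant H such that whenever g1, g2 ∈ ℤ[x] have degrees d1 and d2 respectively and ht(g1) > H or ht(g2) > H, then ht(g1·g2) > min(ht(g1), ht(g2)). -/
open Polynomial

section Aux

lemma htZ_bdd (g : Polynomial ℤ) : BddAbove (Set.range fun i => |((g.coeff i : ℤ) : ℝ)|) := by
  refine ⟨∑ i ∈ g.support, |((g.coeff i : ℤ) : ℝ)|, ?_⟩
  rintro _ ⟨i, rfl⟩
  by_cases h : i ∈ g.support
  · exact Finset.single_le_sum (f := fun j => |((g.coeff j : ℤ) : ℝ)|)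
      (fun j _ => abs_nonneg _) h
  · simp only [Polynomial.notMem_support_iff] at h
    simp [h]
    positivity

lemma abs_coeff_le_htZ (g : Polynomial ℤ) (i : ℕ) : |((g.coeff i : ℤ) : ℝ)| ≤ htZ g :=
  le_ciSup (htZ_bdd g) i

lemma htZ_nonneg (g : Polynomial ℤ) : 0 ≤ htZ g :=
  le_trans (abs_nonneg _) (abs_coeff_le_htZ g 0)

lemma one_le_htZ (g : Polynomial ℤ) (hg : g ≠ 0) : 1 ≤ htZ g := by
  refine le_trans ?_ (abs_coeff_le_htZ g g.natDegree)
  have h := Polynomial.leadingCoeff_ne_zero.2 hg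
  have h1 : (1 : ℤ) ≤ |g.leadingCoeff| := Int.one_le_abs h
  rw [Polynomial.leadingCoeff] at h1
  exact_mod_cast (by exact_mod_cast h1 : (1:ℝ) ≤ |((g.coeff g.natDegree : ℤ) : ℝ)|)

noncomputable def toPolyR {n : ℕ} (a : Fin n → ℝ) : Polynomial ℝ :=
  ∑ i, Polynomial.C (a i) * Polynomial.X ^ (i : ℕ)

lemma toPolyR_coeff {n : ℕ} (a : Fin n → ℝ) (k : ℕ) :
    (toPolyR a).coeff k = if h : k < n then a ⟨k, h⟩ else 0 := by
  unfold toPolyR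
  rw [Polynomial.finset_sum_coeff]
  simp only [Polynomial.coeff_C_mul, Polynomial.coeff_X_pow, mul_ite, mul_one, mul_zero]
  by_cases h : k < n
  · rw [dif_pos h]
    rw [Finset.sum_eq_single (⟨k, h⟩ : Fin n)]
    · simp
    · intro b _ hb
      rw [if_neg]
      intro hc
      exact hb (Fin.ext hc.symm)
    · simp
  · rw [dif_neg h]
    apply Finset.sum_eq_zero
    intro i _
    rw [if_neg]
    intro hc
    exact h (hc ▸ i.isLt)

lemma toPolyR_natDegree_le {n : ℕ} (a : Fin (n+1) → ℝ) : (toPolyR a).natDegree ≤ n := by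
  rw [Polynomial.natDegree_le_iff_coeff_eq_zero]
  intro m hm
  rw [toPolyR_coeff, dif_neg (by omega)]

lemma toPolyR_ne_zero {n : ℕ} (a : Fin n → ℝ) (ha : a ≠ 0) : toPolyR a ≠ 0 := by
  obtain ⟨i, hi⟩ := Function.ne_iff.1 ha
  intro h
  apply hi
  have := toPolyR_coeff a i
  rw [h, Polynomial.coeff_zero, dif_pos i.isLt] at this
  simpa using this.symm

lemma toPolyR_smul {n : ℕ} (c : ℝ) (a : Fin n → ℝ) :
    toPolyR (c • a) = Polynomial.C c * toPolyR a := by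
  unfold toPolyR
  rw [Finset.mul_sum]
  congr 1; funext i
  simp [mul_assoc, Polynomial.C_mul]

noncomputable def vecC (d : ℕ) (g : Polynomial ℤ) : Fin (d+1) → ℝ := fun i => (g.coeff i : ℝ)

lemma toPolyR_vecC (d : ℕ) (g : Polynomial ℤ) (hd : g.natDegree ≤ d) :
    toPolyR (vecC d g) = g.map (Int.castRingHom ℝ) := by
  ext k
  rw [toPolyR_coeff, Polynomial.coeff_map]
  by_cases h : k < d + 1
  · rw [dif_pos h]; rfl
  · rw [dif_neg h, Polynomial.coeff_eq_zero_of_natDegree_lt (by omega)]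
    simp

lemma htZ_eq_norm (d : ℕ) (g : Polynomial ℤ) (hd : g.natDegree ≤ d) :
    htZ g = ‖vecC d g‖ := by
  apply le_antisymm
  · apply ciSup_le
    intro i
    by_cases h : i < d + 1
    · have : |((g.coeff i : ℤ) : ℝ)| = ‖vecC d g ⟨i, h⟩‖ := by simp [vecC, Real.norm_eq_abs]
      rw [this]
      exact norm_le_pi_norm _ _
    · rw [Polynomial.coeff_eq_zero_of_natDegree_lt (by omega)]
      simp only [Int.cast_zero, abs_zero]
      exact norm_nonneg _
  · rw [pi_norm_le_iff_of_nonneg (htZ_nonneg g)]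
    intro i
    rw [Real.norm_eq_abs]
    exact abs_coeff_le_htZ g (i : ℕ)

noncomputable def mulVec {d1 d2 : ℕ} (a : Fin (d1+1) → ℝ) (b : Fin (d2+1) → ℝ) :
    Fin (d1+d2+1) → ℝ := fun k => (toPolyR a * toPolyR b).coeff k

lemma mulVec_apply {d1 d2 : ℕ} (a : Fin (d1+1) → ℝ) (b : Fin (d2+1) → ℝ) (k : Fin (d1+d2+1)) :
    mulVec a b k = ∑ i : Fin (d1+1), ∑ j : Fin (d2+1),
      if (i:ℕ) + (j:ℕ) = (k:ℕ) then a i * b j else 0 := by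
  unfold mulVec toPolyR
  rw [Finset.sum_mul_sum]
  rw [Polynomial.finset_sum_coeff]
  congr 1; funext i
  rw [Polynomial.finset_sum_coeff]
  congr 1; funext j
  have : Polynomial.C (a i) * Polynomial.X ^ (i:ℕ) * (Polynomial.C (b j) * Polynomial.X ^ (j:ℕ))
      = Polynomial.C (a i * b j) * Polynomial.X ^ ((i:ℕ) + (j:ℕ)) := by
    rw [Polynomial.C_mul, pow_add]; ring
  rw [this, Polynomial.coeff_C_mul, Polynomial.coeff_X_pow]
  simp [mul_ite, eq_comm]

lemma mulVec_continuous {d1 d2 : ℕ} :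
    Continuous (fun p : (Fin (d1+1) → ℝ) × (Fin (d2+1) → ℝ) => mulVec p.1 p.2) := by
  apply continuous_pi
  intro k
  simp only [mulVec_apply]
  apply continuous_finset_sum
  intro i _
  apply continuous_finset_sum
  intro j _
  by_cases h : (i:ℕ) + (j:ℕ) = (k:ℕ)
  · simp only [if_pos h]
    exact ((continuous_apply i).comp continuous_fst).mul ((continuous_apply j).comp continuous_snd)
  · simp only [if_neg h]
    exact continuous_const

lemma mulVec_smul_left {d1 d2 : ℕ} (c : ℝ) (a : Fin (d1+1) → ℝ) (b : Fin (d2+1) → ℝ) :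
    mulVec (c • a) b = c • mulVec a b := by
  funext k
  simp only [mulVec, toPolyR_smul, Pi.smul_apply, smul_eq_mul, mul_assoc,
    Polynomial.coeff_C_mul]

lemma mulVec_smul_right {d1 d2 : ℕ} (c : ℝ) (a : Fin (d1+1) → ℝ) (b : Fin (d2+1) → ℝ) :
    mulVec a (c • b) = c • mulVec a b := by
  funext k
  simp only [mulVec, toPolyR_smul, Pi.smul_apply, smul_eq_mul]
  rw [show toPolyR a * (Polynomial.C c * toPolyR b) = Polynomial.C c * (toPolyR a * toPolyR b)
    by ring, Polynomial.coeff_C_mul]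

set_option maxHeartbeats 1000000 in
lemma mulVec_key (d1 d2 : ℕ) : ∃ μ : ℝ, 0 < μ ∧
    ∀ (a : Fin (d1+1) → ℝ) (b : Fin (d2+1) → ℝ), a ≠ 0 → b ≠ 0 →
      μ * (‖a‖ * ‖b‖) ≤ ‖mulVec a b‖ := by
  set K : Set ((Fin (d1+1) → ℝ) × (Fin (d2+1) → ℝ)) :=
    Metric.sphere 0 1 ×ˢ Metric.sphere 0 1 with hKdef
  have hK : IsCompact K := (isCompact_sphere _ _).prod (isCompact_sphere _ _)
  have hne : K.Nonempty := by
    refine Set.Nonempty.prod ?_ ?_ <;>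
      exact NormedSpace.sphere_nonempty.2 zero_le_one
  have hf : Continuous (fun p : (Fin (d1+1) → ℝ) × (Fin (d2+1) → ℝ) => ‖mulVec p.1 p.2‖) :=
    mulVec_continuous.norm
  obtain ⟨p0, hp0K, hmin⟩ := hK.exists_isMinOn hne hf.continuousOn
  have hmin' := isMinOn_iff.mp hmin
  set μ := ‖mulVec p0.1 p0.2‖ with hμdef
  have hp1 : ‖p0.1‖ = 1 := by
    have := hp0K.1; simpa using this
  have hp2 : ‖p0.2‖ = 1 := by
    have := hp0K.2; simpa using this
  have hμpos : 0 < μ := by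
    rcases eq_or_lt_of_le (norm_nonneg (mulVec p0.1 p0.2)) with h | h
    · exfalso
      have hz : mulVec p0.1 p0.2 = 0 := by
        rw [← norm_eq_zero]; exact h.symm
      have ha : p0.1 ≠ 0 := by intro h0; rw [h0] at hp1; simp at hp1
      have hb : p0.2 ≠ 0 := by intro h0; rw [h0] at hp2; simp at hp2
      have hprod : toPolyR p0.1 * toPolyR p0.2 ≠ 0 :=
        mul_ne_zero (toPolyR_ne_zero _ ha) (toPolyR_ne_zero _ hb)
      have hdeg : (toPolyR p0.1 * toPolyR p0.2).natDegree ≤ d1 + d2 :=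
        le_trans (Polynomial.natDegree_mul_le)
          (add_le_add (toPolyR_natDegree_le _) (toPolyR_natDegree_le _))
      have hlc : (toPolyR p0.1 * toPolyR p0.2).coeff
          ((toPolyR p0.1 * toPolyR p0.2).natDegree) ≠ 0 :=
        Polynomial.leadingCoeff_ne_zero.2 hprod
      have : mulVec p0.1 p0.2 ⟨(toPolyR p0.1 * toPolyR p0.2).natDegree, by omega⟩ ≠ 0 := by
        simpa [mulVec] using hlc
      rw [hz] at this; simp at this
    · exact h
  refine ⟨μ, hμpos, ?_⟩
  intro a b ha hb
  have hna : ‖a‖ ≠ 0 := norm_ne_zero_iff.2 ha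
  have hnb : ‖b‖ ≠ 0 := norm_ne_zero_iff.2 hb
  set a' := ‖a‖⁻¹ • a
  set b' := ‖b‖⁻¹ • b
  have ha' : ‖a'‖ = 1 := norm_smul_inv_norm ha
  have hb' : ‖b'‖ = 1 := norm_smul_inv_norm hb
  have hmem : (a', b') ∈ K := by
    constructor <;> simp [ha', hb']
  have hge : μ ≤ ‖mulVec a' b'‖ := hmin' (a', b') hmem
  have heq : mulVec a b = (‖a‖ * ‖b‖) • mulVec a' b' := by
    have h1 : a = ‖a‖ • a' := by
      rw [smul_smul, mul_inv_cancel₀ hna, one_smul]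
    have h2 : b = ‖b‖ • b' := by
      rw [smul_smul, mul_inv_cancel₀ hnb, one_smul]
    conv_lhs => rw [h1, h2]
    rw [mulVec_smul_left, mulVec_smul_right, smul_smul]
  rw [heq, norm_smul, Real.norm_eq_abs, abs_of_nonneg (by positivity)]
  calc μ * (‖a‖ * ‖b‖) = (‖a‖ * ‖b‖) * μ := by ring
    _ ≤ (‖a‖ * ‖b‖) * ‖mulVec a' b'‖ := by
        apply mul_le_mul_of_nonneg_left hge (by positivity)

lemma htZ_mul_key (d1 d2 : ℕ) : ∃ μ : ℝ, 0 < μ ∧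
    ∀ g1 g2 : Polynomial ℤ, g1 ≠ 0 → g2 ≠ 0 →
      g1.natDegree = d1 → g2.natDegree = d2 →
      μ * (htZ g1 * htZ g2) ≤ htZ (g1 * g2) := by
  obtain ⟨μ, hμ, hkey⟩ := mulVec_key d1 d2
  refine ⟨μ, hμ, ?_⟩
  intro g1 g2 hg1 hg2 hd1 hd2
  have hle1 : g1.natDegree ≤ d1 := hd1.le
  have hle2 : g2.natDegree ≤ d2 := hd2.le
  have hlem : (g1 * g2).natDegree ≤ d1 + d2 :=
    le_trans (Polynomial.natDegree_mul_le) (add_le_add hle1 hle2)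
  have hvec : mulVec (vecC d1 g1) (vecC d2 g2) = vecC (d1 + d2) (g1 * g2) := by
    funext k
    simp only [mulVec, toPolyR_vecC d1 g1 hle1, toPolyR_vecC d2 g2 hle2, ← Polynomial.map_mul,
      Polynomial.coeff_map, vecC]
    simp
  have ha : vecC d1 g1 ≠ 0 := by
    intro h0
    have := htZ_eq_norm d1 g1 hle1
    rw [h0, norm_zero] at this
    have := one_le_htZ g1 hg1
    linarith
  have hb : vecC d2 g2 ≠ 0 := by
    intro h0
    have := htZ_eq_norm d2 g2 hle2
    rw [h0, norm_zero] at this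
    have := one_le_htZ g2 hg2
    linarith
  rw [htZ_eq_norm d1 g1 hle1, htZ_eq_norm d2 g2 hle2, htZ_eq_norm (d1 + d2) (g1 * g2) hlem,
    ← hvec]
  exact hkey _ _ ha hb

end Aux

/-- For fixed degrees `d1, d2` there is a constant `H` such that whenever
`g₁, g₂ ∈ ℤ[x]` have degrees `d1, d2` and one of them has height `> H`, the
product has height greater than `min(ht g₁, ht g₂)`. -/
theorem bounded_height_of_large_ratio (d1 d2 : ℕ) (h1 : 1 ≤ d1) (h2 : 1 ≤ d2) :
    ∃ H : ℝ, ∀ g1 g2 : Polynomial ℤ,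
      g1.natDegree = d1 → g2.natDegree = d2 →
      (htZ g1 > H ∨ htZ g2 > H) →
      min (htZ g1) (htZ g2) < htZ (g1 * g2) := by
  obtain ⟨μ, hμ, hkey⟩ := htZ_mul_key d1 d2
  refine ⟨μ⁻¹, ?_⟩
  intro g1 g2 hd1 hd2 hcase
  have hg1 : g1 ≠ 0 := by
    intro h; rw [h, Polynomial.natDegree_zero] at hd1; omega
  have hg2 : g2 ≠ 0 := by
    intro h; rw [h, Polynomial.natDegree_zero] at hd2; omega
  have ht1 : 1 ≤ htZ g1 := one_le_htZ g1 hg1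
  have ht2 : 1 ≤ htZ g2 := one_le_htZ g2 hg2
  have hprod := hkey g1 g2 hg1 hg2 hd1 hd2
  have hcancel : μ * μ⁻¹ = 1 := mul_inv_cancel₀ hμ.ne'
  rcases hcase with hgt | hgt
  · refine lt_of_le_of_lt (min_le_right _ _) ?_
    refine lt_of_lt_of_le ?_ hprod
    have hpos2 : (0:ℝ) < htZ g2 := by linarith
    have h := mul_lt_mul_of_pos_left (mul_lt_mul_of_pos_right hgt hpos2) hμ
    rw [← mul_assoc, hcancel, one_mul] at h
    exact h
  · refine lt_of_le_of_lt (min_le_left _ _) ?_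
    refine lt_of_lt_of_le ?_ hprod
    have hpos1 : (0:ℝ) < htZ g1 := by linarith
    have h := mul_lt_mul_of_pos_left (mul_lt_mul_of_pos_right hgt hpos1) hμ
    rw [← mul_assoc, hcancel, one_mul] at h
    calc htZ g1 < μ * (htZ g2 * htZ g1) := h
      _ = μ * (htZ g1 * htZ g2) := by ring
end

section
/- For any nonzero f ∈ ℂ[x] of degree d and any positive integer n, ht(f^n) satisfies |f|_∘^n / (1 + n·d) ≤ ht(f^n) ≤ |f|_∘^n, where |f|_∘ = max over θ ∈ [0,1) of |f(e^{2πiθ})| is the maximum modulus of f on the unit circle. -/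
open Polynomial

/-- Maximum modulus of `f` on the unit circle. -/
noncomputable def circleNorm (f : Polynomial ℂ) : ℝ :=
  sSup { r : ℝ | ∃ z : ℂ, ‖z‖ = 1 ∧ r = ‖f.eval z‖ }

/-!
Upper bound: sampling `f ^ n` at the `N`-th roots of unity and applying the inverse discrete
Fourier transform writes each coefficient as an average of `N` values of modulus at most
`|f ^ n|_∘ = |f|_∘ ^ n`. Lower bound: on the unit circle `f ^ n` is a sum of `n d + 1` monomials,
each of modulus at most `ht (f ^ n)`.
-/

theorem IsPrimitiveRoot.geom_sum_pow_eq_zero {R : Type*} [CommRing R] [IsDomain R] {ζ : R}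
    {N j : ℕ} (hζ : IsPrimitiveRoot ζ N) (hj : ¬ N ∣ j) :
    ∑ k ∈ Finset.range N, (ζ ^ j) ^ k = 0 := by
  have hne : ζ ^ j - 1 ≠ 0 := sub_ne_zero.mpr fun h => hj (hζ.pow_eq_one_iff_dvd j |>.mp h)
  have hmul : (ζ ^ j - 1) * ∑ k ∈ Finset.range N, (ζ ^ j) ^ k = 0 := by
    rw [mul_geom_sum, ← pow_mul, mul_comm, pow_mul, hζ.pow_eq_one, one_pow, sub_self]
  exact (mul_eq_zero.mp hmul).resolve_left hne

/-- Inverse discrete Fourier transform; `ζ ^ (N - i)` plays the role of `ζ⁻¹ ^ i`. -/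
theorem IsPrimitiveRoot.sum_eval_pow_mul_eq_coeff {R : Type*} [CommRing R] [IsDomain R] {ζ : R}
    {N : ℕ} (hζ : IsPrimitiveRoot ζ N) {p : R[X]} (hp : p.natDegree < N) {i : ℕ} (hi : i < N) :
    ∑ k ∈ Finset.range N, p.eval (ζ ^ k) * (ζ ^ k) ^ (N - i) = N * p.coeff i := by
  have hsum : ∀ j ∈ Finset.range N,
      ∑ k ∈ Finset.range N, (ζ ^ (j + (N - i))) ^ k = if j = i then (N : R) else 0 := by
    intro j hj
    split_ifs with hji
    · simp [hji, Nat.add_sub_cancel' hi.le, hζ.pow_eq_one]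
    · refine hζ.geom_sum_pow_eq_zero fun hdvd => hji ?_
      have := Nat.eq_of_dvd_of_lt_two_mul (by omega) hdvd (by have := Finset.mem_range.mp hj; omega)
      omega
  calc ∑ k ∈ Finset.range N, p.eval (ζ ^ k) * (ζ ^ k) ^ (N - i)
      = ∑ j ∈ Finset.range N, p.coeff j * ∑ k ∈ Finset.range N, (ζ ^ (j + (N - i))) ^ k := by
        simp_rw [eval_eq_sum_range' hp, Finset.sum_mul, Finset.mul_sum]
        rw [Finset.sum_comm]
        refine Finset.sum_congr rfl fun j _ => Finset.sum_congr rfl fun k _ => ?_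
        ring
    _ = N * p.coeff i := by
        rw [Finset.sum_congr rfl fun j hj => congrArg (p.coeff j * ·) (hsum j hj)]
        simp [hi, mul_comm]

theorem Polynomial.norm_coeff_le_of_forall_norm_eval_le {p : ℂ[X]} {M : ℝ}
    (h : ∀ z : ℂ, ‖z‖ = 1 → ‖p.eval z‖ ≤ M) (i : ℕ) : ‖p.coeff i‖ ≤ M := by
  set N := max p.natDegree i + 1
  have hN : N ≠ 0 := Nat.succ_ne_zero _
  have hζ := Complex.isPrimitiveRoot_exp N hN
  set ζ := Complex.exp (2 * Real.pi * Complex.I / N)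
  have hζ_norm : ∀ k : ℕ, ‖ζ ^ k‖ = 1 := fun k => by rw [norm_pow, hζ.norm'_eq_one hN, one_pow]
  have hNM : ‖(N : ℂ) * p.coeff i‖ ≤ N * M :=
    calc ‖(N : ℂ) * p.coeff i‖
        = ‖∑ k ∈ Finset.range N, p.eval (ζ ^ k) * (ζ ^ k) ^ (N - i)‖ := by
          rw [hζ.sum_eval_pow_mul_eq_coeff (by omega) (by omega)]
      _ ≤ ∑ k ∈ Finset.range N, ‖p.eval (ζ ^ k) * (ζ ^ k) ^ (N - i)‖ := norm_sum_le _ _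
      _ ≤ ∑ _k ∈ Finset.range N, M := by
          refine Finset.sum_le_sum fun k _ => ?_
          rw [norm_mul, norm_pow, hζ_norm, one_pow, mul_one]
          exact h _ (hζ_norm k)
      _ = N * M := by simp
  rw [norm_mul, Complex.norm_natCast] at hNM
  exact le_of_mul_le_mul_left hNM (by positivity)

theorem isCompact_circleNorm_set (f : ℂ[X]) :
    IsCompact { r : ℝ | ∃ z : ℂ, ‖z‖ = 1 ∧ r = ‖f.eval z‖ } := by
  convert (isCompact_sphere (0 : ℂ) 1).image (continuous_norm.comp f.continuous) using 1
  ext r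
  simp [eq_comm]

theorem le_circleNorm (f : ℂ[X]) {z : ℂ} (hz : ‖z‖ = 1) : ‖f.eval z‖ ≤ circleNorm f :=
  le_csSup (isCompact_circleNorm_set f).bddAbove ⟨z, hz, rfl⟩

theorem circleNorm_le {f : ℂ[X]} {M : ℝ} (h : ∀ z : ℂ, ‖z‖ = 1 → ‖f.eval z‖ ≤ M) :
    circleNorm f ≤ M :=
  csSup_le ⟨_, 1, by simp, rfl⟩ fun _ ⟨z, hz, hr⟩ => hr ▸ h z hz

theorem exists_circleNorm_eq (f : ℂ[X]) : ∃ z : ℂ, ‖z‖ = 1 ∧ circleNorm f = ‖f.eval z‖ :=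
  (isCompact_circleNorm_set f).sSup_mem ⟨_, 1, by simp, rfl⟩

theorem circleNorm_pow (f : ℂ[X]) (n : ℕ) : circleNorm (f ^ n) = circleNorm f ^ n := by
  refine le_antisymm (circleNorm_le fun z hz => ?_) ?_
  · rw [eval_pow, norm_pow]
    exact pow_le_pow_left₀ (norm_nonneg _) (le_circleNorm f hz) n
  · obtain ⟨z, hz, hmax⟩ := exists_circleNorm_eq f
    simpa [hmax] using le_circleNorm (f ^ n) hz

theorem norm_coeff_le_circleNorm (p : ℂ[X]) (i : ℕ) : ‖p.coeff i‖ ≤ circleNorm p :=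
  p.norm_coeff_le_of_forall_norm_eval_le (fun _ => le_circleNorm p) i

theorem norm_coeff_le_ht (p : ℂ[X]) (i : ℕ) : ‖p.coeff i‖ ≤ ht p :=
  le_ciSup ⟨circleNorm p, Set.forall_mem_range.mpr (norm_coeff_le_circleNorm p)⟩ i

theorem ht_le_circleNorm (p : ℂ[X]) : ht p ≤ circleNorm p :=
  ciSup_le (norm_coeff_le_circleNorm p)

theorem Polynomial.norm_eval_le_mul_ht (p : ℂ[X]) {z : ℂ} (hz : ‖z‖ ≤ 1) :
    ‖p.eval z‖ ≤ (p.natDegree + 1) * ht p :=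
  calc ‖p.eval z‖ = ‖∑ j ∈ Finset.range (p.natDegree + 1), p.coeff j * z ^ j‖ := by
        rw [eval_eq_sum_range]
    _ ≤ ∑ j ∈ Finset.range (p.natDegree + 1), ‖p.coeff j * z ^ j‖ := norm_sum_le _ _
    _ ≤ ∑ _j ∈ Finset.range (p.natDegree + 1), ht p := by
        refine Finset.sum_le_sum fun j _ => ?_
        rw [norm_mul, norm_pow]
        exact mul_le_of_le_one_right (norm_nonneg _) (pow_le_one₀ (norm_nonneg _) hz)
          |>.trans (norm_coeff_le_ht p j)
    _ = (p.natDegree + 1) * ht p := by simp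

theorem circleNorm_le_mul_ht (p : ℂ[X]) : circleNorm p ≤ (p.natDegree + 1) * ht p :=
  circleNorm_le fun _ hz => p.norm_eval_le_mul_ht hz.le

theorem height_pow_circleNorm_bounds_general (f : Polynomial ℂ)
    (d : ℕ) (hd : f.natDegree = d) (n : ℕ) :
    circleNorm f ^ n / (1 + n * d) ≤ ht (f ^ n) ∧ ht (f ^ n) ≤ circleNorm f ^ n := by
  rw [← circleNorm_pow]
  refine ⟨?_, ht_le_circleNorm _⟩
  rw [div_le_iff₀ (by positivity)]
  calc circleNorm (f ^ n) ≤ ((f ^ n).natDegree + 1) * ht (f ^ n) := circleNorm_le_mul_ht _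
    _ = ht (f ^ n) * (1 + n * d) := by rw [natDegree_pow, hd]; push_cast; ring

/-- For nonzero `f ∈ ℂ[x]` of degree `d` and `n ≥ 1`:
`|f|∘^n / (1 + n d) ≤ ht(f^n) ≤ |f|∘^n`. -/
theorem height_pow_circleNorm_bounds (f : Polynomial ℂ) (hf : f ≠ 0)
    (d : ℕ) (hd : f.natDegree = d) (n : ℕ) (hn : 1 ≤ n) :
    circleNorm f ^ n / (1 + n * d) ≤ ht (f ^ n) ∧ ht (f ^ n) ≤ circleNorm f ^ n :=
  height_pow_circleNorm_bounds_general f d hd n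
end
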